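/- Let A be a finite set with at least 3 elements and O a complete cyclic order on A. Then O = O_{ρ_O}, where ρ_O is the convenient binary relation induced by O and O_{ρ_O} is the cyclic order induced by ρ_O. -/

import Mathlib

/-- A ternary relation `O` is a cyclic order if it is asymmetric, transitive and cyclic. -/
def IsCyclicOrder {A : Type*} (O : A → A → A → Prop) : Prop :=
  (∀ x y z, O x y z → ¬ O z y x) ∧
  (∀ x y z u, O x y z → O x z u → O x y u) ∧
  (∀ x y z, O x y z → O y z x)

/-- A cyclic order is complete if any three pairwise distinct elements admit a
permutation that is cyclically ordered. -/
def IsCompleteCyclicOrder {A : Type*} (O : A → A → A → Prop) : Prop :=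
  IsCyclicOrder O ∧
  ∀ x y z : A, x ≠ y → y ≠ z → x ≠ z →
    (O x y z ∨ O x z y ∨ O y x z ∨ O y z x ∨ O z x y ∨ O z y x)

/-- The binary relation induced by a cyclic order `O`: `a ρ_O b` iff `O a b c` holds for
every `c ∉ {a, b}`. -/
def rhoOf {A : Type*} (O : A → A → A → Prop) (a b : A) : Prop :=
  ∀ c, c ≠ a → c ≠ b → O a b c

/-- The ternary relation induced by a convenient relation `ρ`: `(a₁, a₂, a₃) ∈ O_ρ` iff
`a₁, a₂, a₃` are pairwise distinct and there is a cyclic sequence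
`a₁ = x₀, …, x_{m₁} = a₂ = y₀, …, y_{m₂} = a₃ = z₀, …, z_{m₃} = a₁` whose consecutive
members are `ρ`-related and whose intermediate members avoid `{a₁, a₂, a₃}`. -/
def Orho {A : Type*} (ρ : A → A → Prop) (a₁ a₂ a₃ : A) : Prop :=
  a₁ ≠ a₂ ∧ a₂ ≠ a₃ ∧ a₃ ≠ a₁ ∧
  ∃ (m₁ m₂ m₃ : ℕ) (x : Fin (m₁ + 1) → A) (y : Fin (m₂ + 1) → A) (z : Fin (m₃ + 1) → A),
    x 0 = a₁ ∧ x (Fin.last m₁) = a₂ ∧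
    y 0 = a₂ ∧ y (Fin.last m₂) = a₃ ∧
    z 0 = a₃ ∧ z (Fin.last m₃) = a₁ ∧
    (∀ i : Fin m₁, ρ (x i.castSucc) (x i.succ)) ∧
    (∀ i : Fin m₂, ρ (y i.castSucc) (y i.succ)) ∧
    (∀ i : Fin m₃, ρ (z i.castSucc) (z i.succ)) ∧
    (∀ i : Fin (m₁ + 1), i ≠ 0 → i ≠ Fin.last m₁ → x i ≠ a₁ ∧ x i ≠ a₂ ∧ x i ≠ a₃) ∧
    (∀ i : Fin (m₂ + 1), i ≠ 0 → i ≠ Fin.last m₂ → y i ≠ a₁ ∧ y i ≠ a₂ ∧ y i ≠ a₃) ∧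
    (∀ i : Fin (m₃ + 1), i ≠ 0 → i ≠ Fin.last m₃ → z i ≠ a₁ ∧ z i ≠ a₂ ∧ z i ≠ a₃)

/-!
`ρ_O` is the successor relation of the finite cyclic order `O`. Walking from `a` along
successors one visits the points of the interval `(a, b)` in order and then reaches `b`;
conversely, a successor walk from `a` that never meets `c` stays inside `(a, c)`, so its
endpoint `b` satisfies `O a b c`. Successors exist because, for fixed `a`, the relation
`O a` is a strict order on the finite set `A`.
-/

inductive RelPath {A : Type*} (ρ : A → A → Prop) (P : A → Prop) : A → A → Prop
  | single {a b : A} : ρ a b → RelPath ρ P a b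
  | cons {a s b : A} : ρ a s → P s → RelPath ρ P s b → RelPath ρ P a b

namespace RelPath

variable {A : Type*} {ρ : A → A → Prop} {P Q : A → Prop} {a b : A}

theorem mono (hPQ : ∀ x, P x → Q x) (h : RelPath ρ P a b) : RelPath ρ Q a b := by
  induction h with
  | single hab => exact .single hab
  | cons has hs _ ih => exact .cons has (hPQ _ hs) ih

theorem exists_fin (h : RelPath ρ P a b) :
    ∃ (m : ℕ) (x : Fin (m + 1) → A), x 0 = a ∧ x (Fin.last m) = b ∧
      (∀ i : Fin m, ρ (x i.castSucc) (x i.succ)) ∧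
      (∀ i : Fin (m + 1), i ≠ 0 → i ≠ Fin.last m → P (x i)) := by
  induction h with
  | @single a b hab =>
    refine ⟨1, ![a, b], rfl, rfl, fun i => ?_, fun i h0 hl => ?_⟩
    · fin_cases i
      exact hab
    · fin_cases i <;> contradiction
  | @cons a s b has hs _ ih =>
    obtain ⟨m, x, hx0, hxl, hstep, hP⟩ := ih
    refine ⟨m + 1, Fin.cons a x, rfl, by rw [← Fin.succ_last, Fin.cons_succ, hxl], ?_, ?_⟩
    · intro i
      induction i using Fin.cases with
      | zero => simpa [hx0] using has
      | succ j => simpa [← Fin.succ_castSucc] using hstep j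
    · intro i h0 hl
      induction i using Fin.cases with
      | zero => contradiction
      | succ j =>
        rw [Fin.cons_succ]
        by_cases hj : j = 0
        · rwa [hj, hx0]
        · exact hP j hj fun h => hl (by rw [h, Fin.succ_last])

theorem of_fin {m : ℕ} (x : Fin (m + 2) → A)
    (hstep : ∀ i : Fin (m + 1), ρ (x i.castSucc) (x i.succ))
    (hP : ∀ i : Fin (m + 2), i ≠ 0 → i ≠ Fin.last (m + 1) → P (x i)) :
    RelPath ρ P (x 0) (x (Fin.last (m + 1))) := by
  induction m with
  | zero => exact .single (hstep 0)
  | succ m ih =>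
    refine .cons (hstep 0) (hP 1 (by simp) (by simp [Fin.ext_iff])) ?_
    exact ih (Fin.tail x) (fun i => hstep i.succ)
      fun i h0 hl => hP i.succ (Fin.succ_ne_zero i) (by simpa [← Fin.succ_last] using hl)

theorem iff_exists_fin (hab : a ≠ b) :
    RelPath ρ P a b ↔ ∃ (m : ℕ) (x : Fin (m + 1) → A), x 0 = a ∧ x (Fin.last m) = b ∧
      (∀ i : Fin m, ρ (x i.castSucc) (x i.succ)) ∧
      (∀ i : Fin (m + 1), i ≠ 0 → i ≠ Fin.last m → P (x i)) := by
  refine ⟨exists_fin, ?_⟩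
  rintro ⟨m, x, rfl, rfl, hstep, hP⟩
  cases m with
  | zero => exact absurd rfl hab
  | succ m => exact of_fin x hstep hP

end RelPath

theorem orho_iff {A : Type*} {ρ : A → A → Prop} {a₁ a₂ a₃ : A} :
    Orho ρ a₁ a₂ a₃ ↔ a₁ ≠ a₂ ∧ a₂ ≠ a₃ ∧ a₃ ≠ a₁ ∧
      RelPath ρ (fun x => x ≠ a₁ ∧ x ≠ a₂ ∧ x ≠ a₃) a₁ a₂ ∧
      RelPath ρ (fun x => x ≠ a₁ ∧ x ≠ a₂ ∧ x ≠ a₃) a₂ a₃ ∧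
      RelPath ρ (fun x => x ≠ a₁ ∧ x ≠ a₂ ∧ x ≠ a₃) a₃ a₁ := by
  constructor
  · rintro ⟨h12, h23, h31, m₁, m₂, m₃, x, y, z, hx0, hxl, hy0, hyl, hz0, hzl,
      hx, hy, hz, hxP, hyP, hzP⟩
    exact ⟨h12, h23, h31, (RelPath.iff_exists_fin h12).2 ⟨m₁, x, hx0, hxl, hx, hxP⟩,
      (RelPath.iff_exists_fin h23).2 ⟨m₂, y, hy0, hyl, hy, hyP⟩,
      (RelPath.iff_exists_fin h31).2 ⟨m₃, z, hz0, hzl, hz, hzP⟩⟩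
  · rintro ⟨h12, h23, h31, p₁, p₂, p₃⟩
    obtain ⟨m₁, x, hx0, hxl, hx, hxP⟩ := p₁.exists_fin
    obtain ⟨m₂, y, hy0, hyl, hy, hyP⟩ := p₂.exists_fin
    obtain ⟨m₃, z, hz0, hzl, hz, hzP⟩ := p₃.exists_fin
    exact ⟨h12, h23, h31, m₁, m₂, m₃, x, y, z, hx0, hxl, hy0, hyl, hz0, hzl,
      hx, hy, hz, hxP, hyP, hzP⟩

namespace IsCyclicOrder

variable {A : Type*} {O : A → A → A → Prop} {a b c d s y : A}

theorem rotate (h : IsCyclicOrder O) (habc : O a b c) : O b c a := h.2.2 a b c habc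

theorem not_swap (h : IsCyclicOrder O) (habc : O a b c) : ¬ O a c b :=
  fun hacb => h.1 a b c habc (h.rotate hacb)

theorem ne (h : IsCyclicOrder O) (habc : O a b c) : a ≠ b ∧ b ≠ c ∧ c ≠ a := by
  refine ⟨?_, ?_, ?_⟩ <;> rintro rfl
  · exact h.not_swap habc (h.rotate habc)
  · exact h.not_swap habc habc
  · exact h.not_swap (h.rotate habc) (h.rotate habc)

theorem trans (h : IsCyclicOrder O) (habc : O a b c) (hacd : O a c d) : O a b d :=
  h.2.1 a b c d habc hacd

theorem trans_right (h : IsCyclicOrder O) (hasb : O a s b) (hsyb : O s y b) : O a y b :=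
  h.rotate (h.trans (h.rotate (h.rotate hasb)) (h.rotate (h.rotate hsyb)))

theorem wellFounded [Finite A] (h : IsCyclicOrder O) (a : A) : WellFounded (O a) :=
  haveI : IsTrans A (O a) := ⟨fun _ _ _ => h.trans⟩
  haveI : Std.Irrefl (O a) := ⟨fun _ hx => (h.ne hx).2.1 rfl⟩
  Finite.wellFounded_of_trans_of_irrefl _

theorem wellFounded_between [Finite A] (h : IsCyclicOrder O) (b : A) :
    WellFounded (fun x y => O y x b) :=
  haveI : IsTrans A (fun x y => O y x b) := ⟨fun _ _ _ hxy hyz => h.trans_right hyz hxy⟩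
  haveI : Std.Irrefl (fun x y => O y x b) := ⟨fun _ hx => (h.ne hx).1 rfl⟩
  Finite.wellFounded_of_trans_of_irrefl _

theorem rhoOf_step (h : IsCyclicOrder O) (hs : s = a ∨ O a s c) (hsy : rhoOf O s y)
    (hyc : y ≠ c) (hca : c ≠ a) : O a y c := by
  rcases hs with rfl | hasc
  · exact hsy c hca hyc.symm
  · exact h.trans_right hasc (hsy c (h.ne hasc).2.1.symm hyc.symm)

theorem of_relPath_rhoOf (h : IsCyclicOrder O) (hp : RelPath (rhoOf O) (· ≠ c) s b)
    (hs : s = a ∨ O a s c) (hbc : b ≠ c) (hca : c ≠ a) : O a b c := by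
  induction hp with
  | single hsb => exact h.rhoOf_step hs hsb hbc hca
  | cons hsy hyc _ ih => exact ih (.inr (h.rhoOf_step hs hsy hyc hca)) hbc

end IsCyclicOrder

namespace IsCompleteCyclicOrder

variable {A : Type*} {O : A → A → A → Prop} {a b c : A}

theorem or_swap (hO : IsCompleteCyclicOrder O) (hab : a ≠ b) (hbc : b ≠ c) (hac : a ≠ c) :
    O a b c ∨ O a c b := by
  have h := hO.1
  rcases hO.2 a b c hab hbc hac with h' | h' | h' | h' | h' | h'
  exacts [.inl h', .inr h', .inr (h.rotate h'), .inl (h.rotate (h.rotate h')),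
    .inl (h.rotate h'), .inr (h.rotate (h.rotate h'))]

theorem rhoOf_of_forall_not (hO : IsCompleteCyclicOrder O) (hab : a ≠ b)
    (hempty : ∀ x, ¬ O a x b) : rhoOf O a b :=
  fun c hca hcb => (hO.or_swap hab (Ne.symm hcb) (Ne.symm hca)).resolve_right (hempty c)

theorem exists_rhoOf_toward [Finite A] (hO : IsCompleteCyclicOrder O) (hab : a ≠ b) :
    ∃ s, rhoOf O a s ∧ (s = b ∨ O a s b) := by
  obtain ⟨s, hs, hmin⟩ :=
    (hO.1.wellFounded a).has_min {x | x = b ∨ O a x b} ⟨b, .inl rfl⟩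
  refine ⟨s, hO.rhoOf_of_forall_not ?_ fun x hxs => hmin x ?_ hxs, hs⟩
  · rcases hs with rfl | hasb
    exacts [hab, (hO.1.ne hasb).1]
  · rcases hs with rfl | hasb
    exacts [.inr hxs, .inr (hO.1.trans hxs hasb)]

theorem relPath_rhoOf_between [Finite A] (hO : IsCompleteCyclicOrder O) (hab : a ≠ b) :
    RelPath (rhoOf O) (fun x => O a x b) a b := by
  induction a using (hO.1.wellFounded_between b).induction with
  | _ a ih =>
  obtain ⟨s, has, rfl | hasb⟩ := hO.exists_rhoOf_toward hab
  · exact .single has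
  · exact .cons has hasb
      ((ih s hasb (hO.1.ne hasb).2.1).mono fun y hsyb => hO.1.trans_right hasb hsyb)

theorem relPath_rhoOf_avoid [Finite A] (hO : IsCompleteCyclicOrder O) (habc : O a b c) :
    RelPath (rhoOf O) (fun x => x ≠ a ∧ x ≠ b ∧ x ≠ c) a b := by
  refine (hO.relPath_rhoOf_between (hO.1.ne habc).1).mono fun x haxb => ?_
  obtain ⟨hax, hxb, -⟩ := hO.1.ne haxb
  exact ⟨hax.symm, hxb, by rintro rfl; exact hO.1.not_swap habc haxb⟩

end IsCompleteCyclicOrder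

theorem complete_cyclic_order_eq_Orho_rhoOf_general {A : Type*} [Fintype A]
    (O : A → A → A → Prop)
    (hO : IsCompleteCyclicOrder O) :
    ∀ a₁ a₂ a₃ : A, O a₁ a₂ a₃ ↔ Orho (rhoOf O) a₁ a₂ a₃ := by
  intro a₁ a₂ a₃
  rw [orho_iff]
  constructor
  · intro h123
    have h231 := hO.1.rotate h123
    obtain ⟨h12, h23, h31⟩ := hO.1.ne h123
    refine ⟨h12, h23, h31, hO.relPath_rhoOf_avoid h123,
      (hO.relPath_rhoOf_avoid h231).mono fun x hx => ?_,
      (hO.relPath_rhoOf_avoid (hO.1.rotate h231)).mono fun x hx => ?_⟩ <;> tauto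
  · rintro ⟨-, h23, h31, p₁₂, -, -⟩
    exact hO.1.of_relPath_rhoOf (p₁₂.mono fun x hx => hx.2.2) (.inl rfl) h23 h31

/-- A complete cyclic order `O` on a finite set with at least three elements coincides
with the cyclic order induced by the convenient relation `ρ_O` generated by `O`. -/
theorem complete_cyclic_order_eq_Orho_rhoOf {A : Type*} [Fintype A]
    (hA : 3 ≤ Fintype.card A) (O : A → A → A → Prop)
    (hO : IsCompleteCyclicOrder O) :
    ∀ a₁ a₂ a₃ : A, O a₁ a₂ a₃ ↔ Orho (rhoOf O) a₁ a₂ a₃ :=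
  complete_cyclic_order_eq_Orho_rhoOf_general O hO
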